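/- arXiv:1910.02182 — 2 statements merged into one kernel-verified Lean document; each statement's English description precedes it below -/
import Mathlib

section
/- Let X be a finite type and let k ≥ 1 be a natural number. Let I and J be finite index sets. Let θ : I → ℝ be nonnegative weights summing to 1, and for each i ∈ I let p_i : X → ℝ be a probability mass function on X; define the mixture p_n by p_n(x) = ∑_{i∈I} θ_i · p_i(x). For each j ∈ J let δ_j : X → ℝ take only the values 0 and 1, and assume determinism: for every x ∈ X at most one j ∈ J has δ_j(x) = 1. For each j ∈ J let g_j : X → ℝ and φ_j ∈ ℝ, and define g_m(x) = ∑_{j∈J} δ_j(x) · (g_j(x) + φ_j). Then the k-th moment of g_m under p_n decomposes as: ∑_{x∈X} p_n(x) · (g_m(x))^k = ∑_{i∈I} θ_i · ∑_{j∈J} ∑_{l=0}^{k} binom(k,l) · φ_j^{k−l} · ( ∑_{x∈X} p_i(x) · δ_j(x) · (g_j(x))^l ), where (g_j(x))^0 is interpreted as 1, so that the l = 0 term equals binom(k,0) · φ_j^k · ∑_x p_i(x) · δ_j(x). -/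
/-!
At each point `x` determinism leaves at most one nonzero summand in `g_m(x)`, so for `k ≥ 1`
(the empty case needs `0 ^ k = 0`) we get `g_m(x) ^ k = ∑ j, δ_j(x) (g_j(x) + φ_j) ^ k`.
Expanding `(g_j(x) + φ_j) ^ k` binomially and exchanging the finite sums gives the formula.
-/

open Finset

theorem eq_zero_or_eq_single_of_forall_eq_zero_or_one {R J : Type*} [Zero R] [One R]
    [DecidableEq J] {δ : J → R} (hδ : ∀ j, δ j = 0 ∨ δ j = 1)
    (hdet : ∀ j j', δ j = 1 → δ j' = 1 → j = j') :
    δ = 0 ∨ ∃ j₀, δ = Pi.single j₀ 1 := by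
  by_cases h : ∃ j₀, δ j₀ = 1
  · obtain ⟨j₀, hj₀⟩ := h
    refine .inr ⟨j₀, funext fun j => ?_⟩
    rcases eq_or_ne j j₀ with rfl | hj
    · simp [hj₀]
    · simpa [hj] using (hδ j).resolve_right (mt (hdet j j₀ · hj₀) hj)
  · push Not at h
    exact .inl (funext fun j => (hδ j).resolve_right (h j))

theorem sum_mul_pow_of_forall_eq_zero_or_one {R J : Type*} [CommSemiring R] [Fintype J]
    {δ : J → R} (hδ : ∀ j, δ j = 0 ∨ δ j = 1) (hdet : ∀ j j', δ j = 1 → δ j' = 1 → j = j')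
    (a : J → R) {k : ℕ} (hk : k ≠ 0) :
    (∑ j, δ j * a j) ^ k = ∑ j, δ j * a j ^ k := by
  classical
  rcases eq_zero_or_eq_single_of_forall_eq_zero_or_one hδ hdet with rfl | ⟨j₀, rfl⟩
  · simp [hk]
  · simp [Pi.single_apply]

theorem sum_mul_add_const_pow {R X : Type*} [CommSemiring R] (s : Finset X) (w f : X → R)
    (c : R) (k : ℕ) :
    ∑ x ∈ s, w x * (f x + c) ^ k =
      ∑ l ∈ range (k + 1), (k.choose l : R) * c ^ (k - l) * ∑ x ∈ s, w x * f x ^ l := by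
  simp only [add_pow, mul_sum]
  rw [sum_comm]
  refine sum_congr rfl fun l _ => sum_congr rfl fun x _ => ?_
  ring

theorem moment_or_gate_decomposition_general
    {X I J : Type*} [Fintype X] [Fintype I] [Fintype J]
    (k : ℕ) (hk : 1 ≤ k)
    (θ : I → ℝ)
    (p : I → X → ℝ)
    (δ : J → X → ℝ) (hδ : ∀ j x, δ j x = 0 ∨ δ j x = 1)
    (hdet : ∀ x : X, ∀ j j' : J, δ j x = 1 → δ j' x = 1 → j = j')
    (g : J → X → ℝ) (φ : J → ℝ) :
    ∑ x, (∑ i, θ i * p i x) * (∑ j, δ j x * (g j x + φ j)) ^ k =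
      ∑ i, θ i * ∑ j, ∑ l ∈ Finset.range (k + 1),
        (k.choose l : ℝ) * φ j ^ (k - l) * ∑ x, p i x * δ j x * g j x ^ l := by
  calc ∑ x, (∑ i, θ i * p i x) * (∑ j, δ j x * (g j x + φ j)) ^ k
      = ∑ x, (∑ i, θ i * p i x) * ∑ j, δ j x * (g j x + φ j) ^ k := by
        congr! 2 with x
        exact sum_mul_pow_of_forall_eq_zero_or_one (hδ · x) (hdet x) _ (by omega)
    _ = ∑ i, θ i * ∑ j, ∑ x, p i x * δ j x * (g j x + φ j) ^ k := by
        simp_rw [sum_mul_sum, mul_sum]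
        rw [eq_comm, sum_comm_cycle]
        refine sum_congr rfl fun x _ => sum_congr rfl fun i _ => sum_congr rfl fun j _ => ?_
        ring
    _ = _ := by simp only [sum_mul_add_const_pow]

/-- Proposition 3: recursive decomposition of the k-th moment of a deterministic OR gate
of a regression circuit w.r.t. an OR (mixture) gate of a probabilistic circuit. -/
theorem moment_or_gate_decomposition
    {X I J : Type*} [Fintype X] [Fintype I] [Fintype J]
    (k : ℕ) (hk : 1 ≤ k)
    (θ : I → ℝ) (hθ0 : ∀ i, 0 ≤ θ i) (hθ1 : ∑ i, θ i = 1)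
    (p : I → X → ℝ) (hp0 : ∀ i x, 0 ≤ p i x) (hp1 : ∀ i, ∑ x, p i x = 1)
    (δ : J → X → ℝ) (hδ : ∀ j x, δ j x = 0 ∨ δ j x = 1)
    (hdet : ∀ x : X, ∀ j j' : J, δ j x = 1 → δ j' x = 1 → j = j')
    (g : J → X → ℝ) (φ : J → ℝ) :
    ∑ x, (∑ i, θ i * p i x) * (∑ j, δ j x * (g j x + φ j)) ^ k =
      ∑ i, θ i * ∑ j, ∑ l ∈ Finset.range (k + 1),
        (k.choose l : ℝ) * φ j ^ (k - l) * ∑ x, p i x * δ j x * g j x ^ l :=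
  moment_or_gate_decomposition_general k hk θ p δ hδ hdet g φ
end

section
/- Let n be a natural number and m a natural number with m ≥ 1, and let F be a decidable predicate on assignments x : Fin n → Bool. On the set Y of assignments y : Fin n → Fin m → Bool, define p(y) = 2^{−n} if for every i ∈ Fin n and all j, j' ∈ Fin m one has y i j = y i j', and p(y) = 0 otherwise. Then: (a) p is a probability mass function on Y, i.e., ∑_{y∈Y} p(y) = 1; and (b) ∑_{y∈Y} p(y) · (if F (fun i => y i 0) then 1 else 0) = (card { x : Fin n → Bool | F(x) }) / 2^n; that is, the expectation of the 0/1 indicator of the copied formula under the uniform distribution over copy-consistent assignments equals the model count of F divided by 2^n. -/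
/-!
The copy-consistent assignments `y` are exactly the images of the injective copying map
`x ↦ fun i _ => x i`, so the `2⁻ⁿ`-weighted sum over them is the uniform average over
`Fin n → Bool`; for the indicator of `F` this average is the model count over `2 ^ n`.
-/

open Finset

section CopyConsistent

variable {ι κ α : Type*} [Fintype ι] [Fintype κ] [Fintype α] [DecidableEq ι] [DecidableEq κ]
  [DecidablePred fun y : ι → κ → α => ∀ i j j', y i j = y i j']

def copyEmbedding [Nonempty κ] : (ι → α) ↪ (ι → κ → α) where
  toFun x i _ := x i
  inj' _ _ h := funext fun i => congrFun (congrFun h i) (Classical.arbitrary κ)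

theorem filter_copyConsistent_eq_map [Nonempty κ] :
    univ.filter (fun y : ι → κ → α => ∀ i j j', y i j = y i j') =
      univ.map (copyEmbedding (ι := ι) (κ := κ) (α := α)) := by
  ext y
  simp only [mem_filter, mem_univ, true_and, mem_map]
  constructor
  · intro hy
    obtain ⟨j₀⟩ := ‹Nonempty κ›
    exact ⟨fun i => y i j₀, funext fun i => funext fun j => hy i j₀ j⟩
  · rintro ⟨x, -, rfl⟩ i j j'
    rfl

theorem sum_ite_copyConsistent {M : Type*} [AddCommMonoid M] [Nonempty κ]
    (g : (ι → κ → α) → M) :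
    ∑ y, (if ∀ i j j', y i j = y i j' then g y else 0) = ∑ x : ι → α, g (copyEmbedding x) := by
  rw [← sum_filter, filter_copyConsistent_eq_map, sum_map]

end CopyConsistent

/-- The uniform distribution over copy-consistent assignments is a probability mass
function, and the expectation of the indicator of the copied formula under it equals
the model count of the original formula divided by 2^n (Theorem 2 reduction). -/
theorem uniform_copy_consistent_expectation
    (n m : ℕ) (hm : 1 ≤ m) (F : (Fin n → Bool) → Prop) [DecidablePred F]
    (p : (Fin n → Fin m → Bool) → ℝ)
    (hp : ∀ y, p y =
      if ∀ (i : Fin n) (j j' : Fin m), y i j = y i j' then (1 : ℝ) / 2 ^ n else 0) :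
    (∀ y, 0 ≤ p y) ∧ (∑ y, p y = 1) ∧
      (∑ y, p y * (if F (fun i => y i ⟨0, hm⟩) then (1 : ℝ) else 0) =
        (Fintype.card {x : Fin n → Bool // F x} : ℝ) / 2 ^ n) := by
  have : Nonempty (Fin m) := ⟨⟨0, hm⟩⟩
  have expectation (f : (Fin n → Fin m → Bool) → ℝ) :
      ∑ y, p y * f y = (∑ x : Fin n → Bool, f (copyEmbedding x)) / 2 ^ n := by
    simp only [hp, ite_mul, zero_mul]
    rw [sum_ite_copyConsistent, ← mul_sum]
    ring
  refine ⟨fun y => by rw [hp y]; positivity, ?_, ?_⟩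
  · simpa [Fintype.card_fun] using expectation fun _ => 1
  · rw [expectation, sum_boole, Fintype.card_subtype]
    rfl
end
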